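/- arXiv:math/0409263 — 2 statements merged into one kernel-verified Lean document; each statement's English description precedes it below -/
import Mathlib

section
/- Let I be a poset and let ⟨A_i, f_{i,j}⟩_{i ≤ j in I} be a direct system of finite distributive ⟨∨,0⟩-semilattices with ⟨∨,0⟩-embeddings f_{i,j} : A_i → A_j (so f_{i,i} = id and f_{j,k} ∘ f_{i,j} = f_{i,k} for i ≤ j ≤ k). Suppose there exist a direct system ⟨B_i, g_{i,j}⟩_{i ≤ j in I} of finite Boolean ⟨∨,0⟩-semilattices with ⟨∨,0⟩-embeddings and lattice embeddings ε_i : A_i → B_i with ε_j ∘ f_{i,j} = g_{i,j} ∘ ε_i for all i ≤ j (a simultaneous lattice embedding). Then for all i ≤ j in I and every join-irreducible element p of A_i, there exists a join-irreducible element q of A_j with q ≤ f_{i,j}(p) such that: (1) ∂^{i,j}q = {p}; and (2) for every k with i ≤ k ≤ j and every r ∈ ∂^{k,j}q, if r ≤ f_{i,k}(1_{A_i}) then r ≤ f_{i,k}(p); where ∂^{i,j}q denotes the set of all minimal elements p' of A_i such that q ≤ f_{i,j}(p'), and 1_{A_i} denotes the largest element of A_i. -/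
/-- A join-semilattice is distributive if whenever `c ≤ a ⊔ b` there are
`x ≤ a` and `y ≤ b` with `c = x ⊔ y`. -/
def SupDistrib (α : Type*) [SemilatticeSup α] : Prop :=
  ∀ a b c : α, c ≤ a ⊔ b → ∃ x y, x ≤ a ∧ y ≤ b ∧ c = x ⊔ y

/-- A `⟨∨,0⟩`-embedding: an injective map preserving binary joins and `⊥`. -/
def IsSupBotEmb {α β : Type*} [SemilatticeSup α] [OrderBot α] [SemilatticeSup β] [OrderBot β]
    (f : α → β) : Prop :=
  Function.Injective f ∧ (∀ a b : α, f (a ⊔ b) = f a ⊔ f b) ∧ f ⊥ = ⊥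

/-- A lattice embedding: an injective map preserving binary joins and binary meets. -/
def IsLatticeEmb {α β : Type*} [Lattice α] [Lattice β] (f : α → β) : Prop :=
  Function.Injective f ∧ (∀ a b : α, f (a ⊔ b) = f a ⊔ f b) ∧
    (∀ a b : α, f (a ⊓ b) = f a ⊓ f b)

/-- Join-irreducibility: `p ≠ ⊥` and `p = x ⊔ y` implies `p = x` or `p = y`. -/
def JoinIrred {α : Type*} [SemilatticeSup α] [OrderBot α] (p : α) : Prop :=
  p ≠ ⊥ ∧ ∀ x y : α, p = x ⊔ y → p = x ∨ p = y


/-- Prime element: nonzero and join-prime. -/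
def BPrime {β : Type*} [SemilatticeSup β] [OrderBot β] (a : β) : Prop :=
  a ≠ ⊥ ∧ ∀ x y : β, a ≤ x ⊔ y → a ≤ x ∨ a ≤ y

lemma mono_of_map_sup {α β : Type*} [SemilatticeSup α] [SemilatticeSup β] {f : α → β}
    (h : ∀ a b, f (a ⊔ b) = f a ⊔ f b) : Monotone f := fun x y hxy =>
  calc f x ≤ f x ⊔ f y := le_sup_left
    _ = f (x ⊔ y) := (h x y).symm
    _ = f y := by rw [sup_eq_right.2 hxy]

lemma le_reflect {α β : Type*} [SemilatticeSup α] [SemilatticeSup β] {f : α → β}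
    (hinj : Function.Injective f) (h : ∀ a b, f (a ⊔ b) = f a ⊔ f b) {x y : α}
    (hle : f x ≤ f y) : x ≤ y := by
  have h1 : f (x ⊔ y) = f y := by rw [h]; exact sup_eq_right.2 hle
  exact le_sup_left.trans_eq (hinj h1)

lemma BPrime.le_finsetSup {β ι : Type*} [Lattice β] [OrderBot β] {a : β}
    (ha : BPrime a) {s : Finset ι} {F : ι → β} (h : a ≤ s.sup F) :
    ∃ i ∈ s, a ≤ F i := by
  classical
  induction s using Finset.cons_induction with
  | empty =>
    rw [Finset.sup_empty, le_bot_iff] at h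
    exact absurd h ha.1
  | cons i s hi ih =>
    rw [Finset.sup_cons] at h
    rcases ha.2 _ _ h with h1 | h2
    · exact ⟨i, Finset.mem_cons_self _ _, h1⟩
    · obtain ⟨j, hj, hle⟩ := ih h2
      exact ⟨j, Finset.mem_cons_of_mem hj, hle⟩

lemma bprime_symm_singleton {β : Type*} [Lattice β] [OrderBot β] {n : ℕ}
    (e : β ≃o Finset (Fin n)) (x : Fin n) : BPrime (e.symm {x}) := by
  constructor
  · intro hbot
    have : ({x} : Finset (Fin n)) = (∅ : Finset (Fin n)) := by
      have := congrArg e hbot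
      rwa [e.apply_symm_apply, e.map_bot] at this
    simp at this
  · intro u v huv
    have h1 : ({x} : Finset (Fin n)) ≤ e u ⊔ e v := by
      have := e.monotone huv
      rwa [e.apply_symm_apply, e.map_sup] at this
    have h2 : x ∈ e u ∪ e v := h1 (Finset.mem_singleton_self x)
    rcases Finset.mem_union.1 h2 with h | h
    · left
      have : e.symm {x} ≤ e.symm (e u) := e.symm.monotone (Finset.singleton_subset_iff.2 h)
      rwa [e.symm_apply_apply] at this
    · right
      have : e.symm {x} ≤ e.symm (e v) := e.symm.monotone (Finset.singleton_subset_iff.2 h)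
      rwa [e.symm_apply_apply] at this

lemma bprime_eq_singleton {β : Type*} [Lattice β] [OrderBot β] {n : ℕ}
    (e : β ≃o Finset (Fin n)) {a : β} (ha : BPrime a) : ∃ x, e a = {x} := by
  have hne : e a ≠ ∅ := by
    intro h
    apply ha.1
    have : e a = e ⊥ := by rw [h, e.map_bot]; rfl
    exact e.injective this
  obtain ⟨x, hx⟩ := Finset.nonempty_iff_ne_empty.2 hne
  refine ⟨x, ?_⟩
  have hsplit : a ≤ e.symm {x} ⊔ e.symm ((e a).erase x) := by
    have : e a ≤ ({x} : Finset (Fin n)) ⊔ (e a).erase x := by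
      intro y hy
      rcases eq_or_ne y x with h | h
      · exact Finset.mem_union.2 (Or.inl (by simp [h]))
      · exact Finset.mem_union.2 (Or.inr (Finset.mem_erase.2 ⟨h, hy⟩))
    have h2 := e.symm.monotone this
    rwa [e.symm_apply_apply, map_sup] at h2
  rcases ha.2 _ _ hsplit with h | h
  · have h2 : e a ⊆ {x} := by
      have := e.monotone h
      rwa [e.apply_symm_apply] at this
    exact (Finset.eq_singleton_iff_unique_mem).2 ⟨hx, fun y hy => Finset.mem_singleton.1 (h2 hy)⟩
  · exfalso
    have h2 : e a ⊆ (e a).erase x := by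
      have := e.monotone h
      rwa [e.apply_symm_apply] at this
    exact (Finset.notMem_erase x (e a)) (h2 hx)

lemma bprime_le_bprime {β : Type*} [Lattice β] [OrderBot β] {n : ℕ}
    (e : β ≃o Finset (Fin n)) {a b : β} (ha : BPrime a) (hb : BPrime b) (hab : a ≤ b) :
    a = b := by
  obtain ⟨x, hx⟩ := bprime_eq_singleton e ha
  obtain ⟨y, hy⟩ := bprime_eq_singleton e hb
  apply e.injective
  rw [hx, hy]
  have : e a ⊆ e b := e.monotone hab
  rw [hx, hy] at this
  simpa using this

lemma bprime_sep {β : Type*} [Lattice β] [OrderBot β] {n : ℕ}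
    (e : β ≃o Finset (Fin n)) {X Y : β} (h : ¬ X ≤ Y) :
    ∃ a : β, BPrime a ∧ a ≤ X ∧ ¬ a ≤ Y := by
  have h2 : ¬ e X ⊆ e Y := fun hc => h (by
    have := e.symm.monotone hc
    rwa [e.symm_apply_apply, e.symm_apply_apply] at this)
  obtain ⟨x, hxX, hxY⟩ := Finset.not_subset.1 h2
  refine ⟨e.symm {x}, bprime_symm_singleton e x, ?_, ?_⟩
  · have := e.symm.monotone (Finset.singleton_subset_iff.2 hxX)
    rwa [e.symm_apply_apply] at this
  · intro hc
    have := e.monotone hc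
    rw [e.apply_symm_apply] at this
    exact hxY (this (Finset.mem_singleton_self x))

lemma bprime_decomp {β γ : Type*} [Lattice β] [OrderBot β] [Lattice γ] [OrderBot γ]
    {n : ℕ} (e : β ≃o Finset (Fin n)) {φ : β → γ} (hφbot : φ ⊥ = ⊥)
    (hφsup : ∀ x y, φ (x ⊔ y) = φ x ⊔ φ y) {c : γ} (hc : BPrime c)
    {X : β} (h : c ≤ φ X) : ∃ b : β, BPrime b ∧ b ≤ X ∧ c ≤ φ b := by
  suffices H : ∀ N : ℕ, ∀ X : β, (e X).card ≤ N → c ≤ φ X → ∃ b, BPrime b ∧ b ≤ X ∧ c ≤ φ b from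
    H _ X le_rfl h
  intro N
  induction N with
  | zero =>
    intro X hcard hle
    have hX : X = ⊥ := by
      apply e.injective
      rw [e.map_bot]
      exact Finset.card_eq_zero.1 (Nat.le_zero.1 hcard)
    rw [hX, hφbot, le_bot_iff] at hle
    exact absurd hle hc.1
  | succ N ih =>
    intro X hcard hle
    rcases Finset.eq_empty_or_nonempty (e X) with hem | ⟨x, hx⟩
    · have hX : X = ⊥ := by
        apply e.injective; rw [e.map_bot]; exact hem
      rw [hX, hφbot, le_bot_iff] at hle
      exact absurd hle hc.1
    · set X' := e.symm ((e X).erase x) with hX'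
      have hsplit : X = e.symm {x} ⊔ X' := by
        apply e.injective
        rw [map_sup, e.apply_symm_apply, e.apply_symm_apply]
        ext y
        simp only [Finset.sup_eq_union, Finset.mem_union, Finset.mem_singleton,
          Finset.mem_erase]
        constructor
        · intro hy
          rcases eq_or_ne y x with h | h
          · exact Or.inl h
          · exact Or.inr ⟨h, hy⟩
        · rintro (rfl | ⟨_, hy⟩)
          · exact hx
          · exact hy
      have hφX : c ≤ φ (e.symm {x}) ⊔ φ X' := by
        rw [← hφsup, ← hsplit]; exact hle
      rcases hc.2 _ _ hφX with h1 | h2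
      · exact ⟨e.symm {x}, bprime_symm_singleton e x, by
          have := e.symm.monotone (Finset.singleton_subset_iff.2 hx)
          rwa [e.symm_apply_apply] at this, h1⟩
      · have hcard' : (e X').card ≤ N := by
          rw [hX', e.apply_symm_apply, Finset.card_erase_of_mem hx]
          omega
        obtain ⟨b, hb1, hb2, hb3⟩ := ih X' hcard' h2
        refine ⟨b, hb1, hb2.trans ?_, hb3⟩
        have : (e X).erase x ⊆ e X := Finset.erase_subset x (e X)
        have := e.symm.monotone this
        rwa [e.symm_apply_apply] at this

lemma exists_least_of_infClosed {β : Type*} [Lattice β] [Finite β] (S : Set β)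
    (hne : S.Nonempty) (hmeet : ∀ x ∈ S, ∀ y ∈ S, x ⊓ y ∈ S) :
    ∃ m ∈ S, ∀ x ∈ S, m ≤ x := by
  classical
  have hfin : S.Finite := Set.toFinite S
  have hsne : hfin.toFinset.Nonempty := by
    obtain ⟨x, hx⟩ := hne
    exact ⟨x, hfin.mem_toFinset.2 hx⟩
  refine ⟨hfin.toFinset.inf' hsne id, ?_, ?_⟩
  · exact Finset.inf'_mem S hmeet _ hsne id (fun i hi => hfin.mem_toFinset.1 hi)
  · intro x hx
    exact Finset.inf'_le id (hfin.mem_toFinset.2 hx)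

lemma exists_greatest_of_supClosed {β : Type*} [Lattice β] [Finite β] (S : Set β)
    (hne : S.Nonempty) (hjoin : ∀ x ∈ S, ∀ y ∈ S, x ⊔ y ∈ S) :
    ∃ m ∈ S, ∀ x ∈ S, x ≤ m := by
  classical
  have hfin : S.Finite := Set.toFinite S
  have hsne : hfin.toFinset.Nonempty := by
    obtain ⟨x, hx⟩ := hne
    exact ⟨x, hfin.mem_toFinset.2 hx⟩
  refine ⟨hfin.toFinset.sup' hsne id, ?_, ?_⟩
  · exact Finset.sup'_mem S hjoin _ hsne id (fun i hi => hfin.mem_toFinset.1 hi)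
  · intro x hx
    exact Finset.le_sup' id (hfin.mem_toFinset.2 hx)

/-- If a direct system of finite distributive `⟨∨,0⟩`-semilattices with
`⟨∨,0⟩`-embeddings admits a simultaneous lattice embedding into a direct system of
finite Boolean `⟨∨,0⟩`-semilattices, then for all `i ≤ j` and every join-irreducible
`p` of `A i` there is a join-irreducible `q ≤ f_{i,j}(p)` of `A j` such that
`∂^{i,j} q = {p}` and for every `i ≤ k ≤ j` and `r ∈ ∂^{k,j} q`, if
`r ≤ f_{i,k}(1)` then `r ≤ f_{i,k}(p)`. -/

theorem stmt5 {I : Type*} [PartialOrder I]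
    {A : I → Type*} [∀ i, Lattice (A i)] [∀ i, OrderBot (A i)] [∀ i, Finite (A i)]
    (hA : ∀ i, SupDistrib (A i))
    (f : ∀ ⦃i j : I⦄, i ≤ j → A i → A j)
    (hf_emb : ∀ ⦃i j : I⦄ (h : i ≤ j), IsSupBotEmb (f h))
    (hf_id : ∀ (i : I) (h : i ≤ i), f h = id)
    (hf_comp : ∀ ⦃i j k : I⦄ (hij : i ≤ j) (hjk : j ≤ k), f hjk ∘ f hij = f (hij.trans hjk))
    {B : I → Type*} [∀ i, Lattice (B i)] [∀ i, OrderBot (B i)] [∀ i, Finite (B i)]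
    (hB : ∀ i, ∃ n : ℕ, Nonempty (B i ≃o Finset (Fin n)))
    (g : ∀ ⦃i j : I⦄, i ≤ j → B i → B j)
    (hg_emb : ∀ ⦃i j : I⦄ (h : i ≤ j), IsSupBotEmb (g h))
    (hg_id : ∀ (i : I) (h : i ≤ i), g h = id)
    (hg_comp : ∀ ⦃i j k : I⦄ (hij : i ≤ j) (hjk : j ≤ k), g hjk ∘ g hij = g (hij.trans hjk))
    (ε : ∀ i, A i → B i)
    (hε : ∀ i, IsLatticeEmb (ε i))
    (hcomm : ∀ ⦃i j : I⦄ (h : i ≤ j), ε j ∘ f h = g h ∘ ε i) :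
    ∀ ⦃i j : I⦄ (hij : i ≤ j), ∀ p : A i, JoinIrred p →
      ∃ q : A j, JoinIrred q ∧ q ≤ f hij p ∧
        ({p' : A i | q ≤ f hij p' ∧ ∀ p'' : A i, q ≤ f hij p'' → p'' ≤ p' → p'' = p'}
          = {p}) ∧
        ∀ ⦃k : I⦄ (hik : i ≤ k) (hkj : k ≤ j), ∀ r : A k,
          (q ≤ f hkj r ∧ ∀ r' : A k, q ≤ f hkj r' → r' ≤ r → r' = r) →
            ∀ t : A i, IsTop t → r ≤ f hik t → r ≤ f hik p := by
  classical
  intro i j hij p hp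
  obtain ⟨ni, ⟨ei⟩⟩ := hB i
  obtain ⟨nj, ⟨ej⟩⟩ := hB j
  -- monotonicity facts
  have hfm : ∀ ⦃i' j' : I⦄ (h : i' ≤ j'), Monotone (f h) :=
    fun _ _ h => mono_of_map_sup (hf_emb h).2.1
  have hgm : ∀ ⦃i' j' : I⦄ (h : i' ≤ j'), Monotone (g h) :=
    fun _ _ h => mono_of_map_sup (hg_emb h).2.1
  have hεm : ∀ i', Monotone (ε i') := fun i' => mono_of_map_sup (hε i').2.1
  have hcomm' : ∀ ⦃i' j' : I⦄ (h : i' ≤ j') (x : A i'), ε j' (f h x) = g h (ε i' x) :=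
    fun _ _ h x => congrFun (hcomm h) x
  -- the top element t0 of A i
  obtain ⟨t0, -, ht0⟩ := exists_greatest_of_supClosed (Set.univ : Set (A i))
    ⟨⊥, trivial⟩ (fun _ _ _ _ => trivial)
  have ht0' : ∀ x : A i, x ≤ t0 := fun x => ht0 x trivial
  -- the largest element xb with ¬ p ≤ xb
  obtain ⟨xb, hxb1, hxb2⟩ := exists_greatest_of_supClosed {x : A i | ¬ p ≤ x}
    ⟨⊥, fun h => hp.1 (le_bot_iff.1 h)⟩
    (by
      intro x hx y hy hc
      obtain ⟨u, v, hux, hvy, hpuv⟩ := hA i x y p hc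
      rcases hp.2 u v hpuv with h | h
      · exact hx (h ▸ hux)
      · exact hy (h ▸ hvy))
  -- the bad atoms and w
  set badS : Set (B i) := {b : B i | BPrime b ∧ b ≤ ε i t0 ∧ ¬ b ≤ ε i p} with hbadS
  have hbadfin : badS.Finite := Set.toFinite badS
  set w : B i := ε i xb ⊔ hbadfin.toFinset.sup id with hw
  -- ε i p ≰ w
  have hεpw : ¬ ε i p ≤ w := by
    intro hcon
    have h1 : ¬ ε i p ≤ ε i xb := fun hc => hxb1 (le_reflect (hε i).1 (hε i).2.1 hc)
    obtain ⟨b', hb'p, hb'le, hb'not⟩ := bprime_sep ei h1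
    rcases hb'p.2 _ _ (hb'le.trans hcon) with h | h
    · exact hb'not h
    · obtain ⟨b, hbmem, hble⟩ := hb'p.le_finsetSup h
      have hbbad : b ∈ badS := hbadfin.mem_toFinset.1 hbmem
      have : b' = b := bprime_le_bprime ei hb'p hbbad.1 hble
      exact hbbad.2.2 (this ▸ hb'le)
  -- choose the atom a
  have hgw : ¬ g hij (ε i p) ≤ g hij w := fun hc =>
    hεpw (le_reflect (hg_emb hij).1 (hg_emb hij).2.1 hc)
  obtain ⟨a, hap, haεp, haw⟩ := bprime_sep ej hgw
  -- q := least element of A j with a ≤ ε j q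
  obtain ⟨q, hqmem, hqmin⟩ := exists_least_of_infClosed {x : A j | a ≤ ε j x}
    ⟨f hij p, by rw [Set.mem_setOf_eq, hcomm' hij]; exact haεp⟩
    (by
      intro x hx y hy
      rw [Set.mem_setOf_eq, (hε j).2.2]
      exact le_inf hx hy)
  have hq_iff : ∀ x : A j, q ≤ x ↔ a ≤ ε j x := by
    intro x
    constructor
    · intro h; exact hqmem.trans (hεm j h)
    · intro h; exact hqmin x h
  have hqp : q ≤ f hij p := (hq_iff _).2 (by rw [hcomm' hij]; exact haεp)
  -- key: q ≤ f hij p' → p ≤ p'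
  have hkey : ∀ p' : A i, q ≤ f hij p' → p ≤ p' := by
    intro p' h
    by_contra hc
    have h1 : a ≤ g hij (ε i p') := by rw [← hcomm' hij]; exact (hq_iff _).1 h
    have h2 : ε i p' ≤ w := le_sup_left.trans' (hεm i (hxb2 p' hc))
    exact haw (h1.trans (hgm hij h2))
  -- q is join-irreducible
  have hqJI : JoinIrred q := by
    constructor
    · intro hbot
      have h1 : a ≤ ε j (⊥ : A j) := hbot ▸ hqmem
      have h2 : ε j (⊥ : A j) = g hij (ε i ⊥) := by
        rw [← (hf_emb hij).2.2, hcomm' hij]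
      have h3 : ε i (⊥ : A i) ≤ w := le_sup_left.trans'
        (hεm i (hxb2 ⊥ (fun hc => hp.1 (le_bot_iff.1 hc))))
      exact haw ((h1.trans_eq h2).trans (hgm hij h3))
    · intro x y hxy
      have h1 : a ≤ ε j x ⊔ ε j y := by
        rw [← (hε j).2.1, ← hxy]; exact hqmem
      rcases hap.2 _ _ h1 with h | h
      · exact Or.inl (le_antisymm ((hq_iff x).2 h) (hxy ▸ le_sup_left))
      · exact Or.inr (le_antisymm ((hq_iff y).2 h) (hxy ▸ le_sup_right))
  refine ⟨q, hqJI, hqp, ?_, ?_⟩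
  · -- ∂ q = {p}
    ext p'
    simp only [Set.mem_setOf_eq, Set.mem_singleton_iff]
    constructor
    · rintro ⟨h1, h2⟩
      exact (h2 p hqp (hkey p' h1)).symm
    · rintro rfl
      exact ⟨hqp, fun p'' h1 h2 => le_antisymm h2 (hkey p'' h1)⟩
  · -- condition (2)
    rintro k hik hkj r ⟨hqr, hrmin⟩ t ht hrt
    obtain ⟨nk, ⟨ek⟩⟩ := hB k
    have hat : a ≤ g hkj (ε k r) := by
      rw [← hcomm' hkj]; exact (hq_iff _).1 hqr
    obtain ⟨c', hc'p, hc'r, hac'⟩ :=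
      bprime_decomp ek (hg_emb hkj).2.2 (hg_emb hkj).2.1 hap hat
    have hct : c' ≤ g hik (ε i t0) := by
      calc c' ≤ ε k r := hc'r
        _ ≤ ε k (f hik t) := hεm k hrt
        _ = g hik (ε i t) := hcomm' hik t
        _ ≤ g hik (ε i t0) := hgm hik (hεm i (ht0' t))
    obtain ⟨b, hbp, hbt0, hc'b⟩ :=
      bprime_decomp ei (hg_emb hik).2.2 (hg_emb hik).2.1 hc'p hct
    have hbεp : b ≤ ε i p := by
      by_contra hnb
      have hbbad : b ∈ hbadfin.toFinset := hbadfin.mem_toFinset.2 ⟨hbp, hbt0, hnb⟩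
      have hbw : b ≤ w := le_sup_right.trans' (Finset.le_sup (f := id) hbbad)
      have h1 : a ≤ g hij b := by
        have h2 : g hkj (g hik b) = g hij b := congrFun (hg_comp hik hkj) b
        exact (hac'.trans (hgm hkj hc'b)).trans_eq h2
      exact haw (h1.trans (hgm hij hbw))
    obtain ⟨r', hr'mem, hr'min⟩ := exists_least_of_infClosed {x : A k | c' ≤ ε k x}
      ⟨r, hc'r⟩
      (by
        intro x hx y hy
        rw [Set.mem_setOf_eq, (hε k).2.2]
        exact le_inf hx hy)
    have hqr' : q ≤ f hkj r' := by
      apply (hq_iff _).2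
      rw [hcomm' hkj]
      exact hac'.trans (hgm hkj hr'mem)
    have hr'r : r' = r := hrmin r' hqr' (hr'min r hc'r)
    have hfp : f hik p ∈ {x : A k | c' ≤ ε k x} := by
      rw [Set.mem_setOf_eq, hcomm' hik]
      exact hc'b.trans (hgm hik hbεp)
    rw [← hr'r]
    exact hr'min _ hfp
end

section
/- There exists a square diagram of finite distributive ⟨∨,0,1⟩-semilattices and ⟨∨,0,1⟩-embeddings, i.e., finite distributive ⟨∨,0⟩-semilattices S, A_1, A_2, A with largest elements together with ⟨∨,0,1⟩-embeddings e_i : S → A_i and h_i : A_i → A (i = 1,2) satisfying h_1 ∘ e_1 = h_2 ∘ e_2, that admits no simultaneous lattice embedding into any square diagram of finite Boolean ⟨∨,0⟩-semilattices: there do not exist finite Boolean ⟨∨,0⟩-semilattices B_S, B_1, B_2, B_A, ⟨∨,0⟩-embeddings e'_i : B_S → B_i and h'_i : B_i → B_A with h'_1 ∘ e'_1 = h'_2 ∘ e'_2, and lattice embeddings ε_S : S → B_S, ε_i : A_i → B_i, ε_A : A → B_A satisfying ε_i ∘ e_i = e'_i ∘ ε_S and ε_A ∘ h_i = h'_i ∘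 ε_i for i = 1,2. -/
/-- A `⟨∨,0,1⟩`-embedding: an injective map preserving binary joins, `⊥` and `⊤`. -/
def IsSupBotTopEmb {α β : Type*} [SemilatticeSup α] [OrderBot α] [OrderTop α]
    [SemilatticeSup β] [OrderBot β] [OrderTop β] (f : α → β) : Prop :=
  Function.Injective f ∧ (∀ a b : α, f (a ⊔ b) = f a ⊔ f b) ∧ f ⊥ = ⊥ ∧ f ⊤ = ⊤

/-- Bundled finite distributive `⟨∨,0,1⟩`-semilattices. -/
structure FDSL1 : Type 1 where
  carrier : Type
  [instL : Lattice carrier]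
  [instBO : BoundedOrder carrier]
  [instFin : Finite carrier]
  distrib : SupDistrib carrier

attribute [instance] FDSL1.instL FDSL1.instBO FDSL1.instFin

instance : CoeSort FDSL1 Type := ⟨FDSL1.carrier⟩

/-- Bundled finite Boolean `⟨∨,0⟩`-semilattices. -/
structure FBSL : Type 1 where
  carrier : Type
  [instL : Lattice carrier]
  [instBot : OrderBot carrier]
  [instFin : Finite carrier]
  boolean : ∃ n : ℕ, Nonempty (carrier ≃o Finset (Fin n))

attribute [instance] FBSL.instL FBSL.instBot FBSL.instFin

instance : CoeSort FBSL Type := ⟨FBSL.carrier⟩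

/-! ### Auxiliary lemmas -/

lemma supDistrib_of_distribLattice {α : Type*} [DistribLattice α] : SupDistrib α :=
  fun a b c h => ⟨a ⊓ c, b ⊓ c, inf_le_left, inf_le_left, by
    rw [← inf_sup_right, inf_eq_right.mpr h]⟩

lemma supMap_mono {α β : Type*} [SemilatticeSup α] [SemilatticeSup β] {f : α → β}
    (hsup : ∀ a b : α, f (a ⊔ b) = f a ⊔ f b) {a b : α} (h : a ≤ b) : f a ≤ f b := by
  have hh : f a ⊔ f b = f b := by rw [← hsup a b, sup_eq_right.mpr h]
  exact sup_eq_right.mp hh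

lemma supEmb_le_iff {α β : Type*} [SemilatticeSup α] [SemilatticeSup β] {f : α → β}
    (hinj : Function.Injective f) (hsup : ∀ a b : α, f (a ⊔ b) = f a ⊔ f b) {a b : α} :
    f a ≤ f b ↔ a ≤ b := by
  constructor
  · intro h
    have hh : f (a ⊔ b) = f b := by rw [hsup a b, sup_eq_right.mpr h]
    exact sup_eq_right.mp (hinj hh)
  · exact supMap_mono hsup

lemma mem_iff_singleton_le {B γ : Type*} [Lattice B] (φ : B ≃o Finset γ) (b : γ) (z : B) :
    b ∈ φ z ↔ φ.symm {b} ≤ z := by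
  constructor
  · intro h
    have h2 : φ.symm ({b} : Finset γ) ≤ φ.symm (φ z) :=
      φ.symm.monotone (Finset.singleton_subset_iff.mpr h)
    rwa [φ.symm_apply_apply] at h2
  · intro h
    have h2 := φ.monotone h
    rw [φ.apply_symm_apply] at h2
    exact Finset.singleton_subset_iff.mp h2

/-- Decomposition of the image of a join-embedding over the points of the argument. -/
lemma supBotEmb_decomp {B C : Type*} {γ δ : Type*} [DecidableEq γ] [DecidableEq δ]
    [Lattice B] [OrderBot B] [Lattice C] [OrderBot C]
    (φ : B ≃o Finset γ) (ψ : C ≃o Finset δ) {f : B → C} (hf : IsSupBotEmb f)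
    (x : B) (ζ : δ) (h : ζ ∈ ψ (f x)) : ∃ k ∈ φ x, ζ ∈ ψ (f (φ.symm {k})) := by
  have key : ∀ t : Finset γ, ζ ∈ ψ (f (φ.symm t)) → ∃ k ∈ t, ζ ∈ ψ (f (φ.symm {k})) := by
    intro t
    induction t using Finset.induction_on with
    | empty =>
      intro hh
      exfalso
      have e1 : φ.symm (∅ : Finset γ) = ⊥ := by
        rw [show (∅ : Finset γ) = ⊥ from rfl, OrderIso.map_bot]
      rw [e1, hf.2.2, OrderIso.map_bot] at hh
      exact absurd hh (by simp)
    | @insert a t ha ih =>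
      intro hh
      have e1 : φ.symm (insert a t) = φ.symm {a} ⊔ φ.symm t := by
        rw [Finset.insert_eq, ← Finset.sup_eq_union, map_sup]
      rw [e1, hf.2.1, map_sup] at hh
      rw [Finset.sup_eq_union, Finset.mem_union] at hh
      rcases hh with hh | hh
      · exact ⟨a, Finset.mem_insert_self a t, hh⟩
      · obtain ⟨k, hk, hk2⟩ := ih hh
        exact ⟨k, Finset.mem_insert_of_mem hk, hk2⟩
  have hx : ζ ∈ ψ (f (φ.symm (φ x))) := by rwa [φ.symm_apply_apply]
  exact key (φ x) hx

/-- A join-embedding between finite Boolean semilattices sends each atom (point) of the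
domain to a set containing a "private" point, characterizing the atom. -/
lemma supBotEmb_private {B C : Type*} {γ δ : Type*} [Fintype γ] [DecidableEq γ] [DecidableEq δ]
    [Lattice B] [OrderBot B] [Lattice C] [OrderBot C]
    (φ : B ≃o Finset γ) (ψ : C ≃o Finset δ) {f : B → C} (hf : IsSupBotEmb f) (ξ : γ) :
    ∃ b : δ, ∀ w : B, b ∈ ψ (f w) ↔ φ.symm {ξ} ≤ w := by
  have h1 : ¬ f (φ.symm {ξ}) ≤ f (φ.symm {ξ}ᶜ) := by
    intro h
    have h2 : φ.symm ({ξ} : Finset γ) ≤ φ.symm ({ξ}ᶜ : Finset γ) :=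
      (supEmb_le_iff hf.1 hf.2.1).mp h
    have h3 : ({ξ} : Finset γ) ≤ ({ξ}ᶜ : Finset γ) := φ.symm.le_iff_le.mp h2
    have h4 : ξ ∈ ({ξ}ᶜ : Finset γ) := h3 (Finset.mem_singleton_self ξ)
    simp at h4
  have h4 : ¬ ψ (f (φ.symm {ξ})) ⊆ ψ (f (φ.symm {ξ}ᶜ)) := fun hh => h1 (ψ.le_iff_le.mp hh)
  obtain ⟨b, hb1, hb2⟩ := Finset.not_subset.mp h4
  refine ⟨b, fun w => ⟨fun hw => ?_, fun hw => ?_⟩⟩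
  · by_contra hle
    have hsub : φ w ⊆ ({ξ}ᶜ : Finset γ) := by
      intro k hk
      rw [Finset.mem_compl, Finset.mem_singleton]
      intro hk'
      subst hk'
      exact hle ((mem_iff_singleton_le φ k w).mp hk)
    have hwle : w ≤ φ.symm ({ξ}ᶜ : Finset γ) := by
      have := φ.symm.monotone hsub
      rwa [φ.symm_apply_apply] at this
    have : ψ (f w) ⊆ ψ (f (φ.symm {ξ}ᶜ)) :=
      ψ.monotone (supMap_mono hf.2.1 hwle)
    exact hb2 (this hw)
  · have : ψ (f (φ.symm {ξ})) ⊆ ψ (f w) := ψ.monotone (supMap_mono hf.2.1 hw)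
    exact this hb1

/-! ### The concrete square -/

/-- `S` is the three-element chain. -/
abbrev sqS : FDSL1 :=
  { carrier := Fin 3, distrib := supDistrib_of_distribLattice }

/-- `A₁ = A₂` is the four-element Boolean lattice. -/
abbrev sqA1 : FDSL1 :=
  { carrier := Finset (Fin 2), distrib := supDistrib_of_distribLattice }

/-- `A` is the eight-element Boolean lattice. -/
abbrev sqA : FDSL1 :=
  { carrier := Finset (Fin 3), distrib := supDistrib_of_distribLattice }

def eMap : Fin 3 → Finset (Fin 2) := ![∅, {0}, Finset.univ]

def h1Map : Finset (Fin 2) → Finset (Fin 3) := fun s => s.biUnion ![{0, 1}, {0, 2}]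

def h2Map : Finset (Fin 2) → Finset (Fin 3) := fun s => s.biUnion ![{0, 1}, {1, 2}]

/-- There is a square of finite distributive `⟨∨,0,1⟩`-semilattices and
`⟨∨,0,1⟩`-embeddings admitting no simultaneous lattice embedding into any square of
finite Boolean `⟨∨,0⟩`-semilattices. -/
theorem stmt6 :
    ∃ (S A1 A2 A : FDSL1) (e1 : S → A1) (e2 : S → A2) (h1 : A1 → A) (h2 : A2 → A),
      IsSupBotTopEmb e1 ∧ IsSupBotTopEmb e2 ∧ IsSupBotTopEmb h1 ∧ IsSupBotTopEmb h2 ∧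
      h1 ∘ e1 = h2 ∘ e2 ∧
      ¬ ∃ (BS B1 B2 BA : FBSL) (e1' : BS → B1) (e2' : BS → B2)
          (h1' : B1 → BA) (h2' : B2 → BA)
          (εS : S → BS) (ε1 : A1 → B1) (ε2 : A2 → B2) (εA : A → BA),
          IsSupBotEmb e1' ∧ IsSupBotEmb e2' ∧ IsSupBotEmb h1' ∧ IsSupBotEmb h2' ∧
          h1' ∘ e1' = h2' ∘ e2' ∧
          IsLatticeEmb εS ∧ IsLatticeEmb ε1 ∧ IsLatticeEmb ε2 ∧ IsLatticeEmb εA ∧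
          ε1 ∘ e1 = e1' ∘ εS ∧ ε2 ∘ e2 = e2' ∘ εS ∧
          εA ∘ h1 = h1' ∘ ε1 ∧ εA ∘ h2 = h2' ∘ ε2 := by
  refine ⟨sqS, sqA1, sqA1, sqA, eMap, eMap, h1Map, h2Map, ?_, ?_, ?_, ?_, ?_, ?_⟩
  · exact ⟨by decide, by decide, by decide, by decide⟩
  · exact ⟨by decide, by decide, by decide, by decide⟩
  · exact ⟨by decide, by decide, by decide, by decide⟩
  · exact ⟨by decide, by decide, by decide, by decide⟩
  · funext s
    exact (by decide : ∀ s : Fin 3, h1Map (eMap s) = h2Map (eMap s)) s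
  rintro ⟨BS, B1, B2, BA, e1', e2', h1', h2', εS, ε1, ε2, εA,
    he1', he2', hh1', hh2', hsq, hεS, hε1, hε2, hεA, hc1, hc2, hc3, hc4⟩
  obtain ⟨nS, ⟨φS⟩⟩ := BS.boolean
  obtain ⟨n1, ⟨φ1⟩⟩ := B1.boolean
  obtain ⟨n2, ⟨φ2⟩⟩ := B2.boolean
  obtain ⟨nA, ⟨φA⟩⟩ := BA.boolean
  have hc1' : ∀ s, ε1 (eMap s) = e1' (εS s) := fun s => congrFun hc1 s
  have hc2' : ∀ s, ε2 (eMap s) = e2' (εS s) := fun s => congrFun hc2 s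
  have hc3' : ∀ x, εA (h1Map x) = h1' (ε1 x) := fun x => congrFun hc3 x
  have hc4' : ∀ y, εA (h2Map y) = h2' (ε2 y) := fun y => congrFun hc4 y
  have hsq' : ∀ w, h1' (e1' w) = h2' (e2' w) := fun w => congrFun hsq w
  -- a point ξ of type `1` in BS
  have hne : ¬ εS (1 : Fin 3) ≤ εS 0 := by
    intro h
    have := (supEmb_le_iff hεS.1 hεS.2.1).mp h
    exact absurd this (by decide)
  have hne2 : ¬ φS (εS 1) ⊆ φS (εS 0) := fun h => hne (φS.le_iff_le.mp h)
  obtain ⟨ξ, hξ1, hξ0⟩ := Finset.not_subset.mp hne2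
  have hξle1 : φS.symm {ξ} ≤ εS 1 := (mem_iff_singleton_le φS ξ _).mp hξ1
  have hξnle0 : ¬ φS.symm {ξ} ≤ εS 0 := fun h => hξ0 ((mem_iff_singleton_le φS ξ _).mpr h)
  -- a private point b of ξ under e1'
  obtain ⟨b, hb⟩ := supBotEmb_private φS φ1 he1' ξ
  -- a private point ζ of b under h1'
  obtain ⟨ζ, hζ⟩ := supBotEmb_private φ1 φA hh1' b
  -- the key transport fact
  have hQ1 : ∀ x : Finset (Fin 2), ζ ∈ φA (εA (h1Map x)) ↔ φ1.symm {b} ≤ ε1 x := by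
    intro x; rw [hc3' x]; exact hζ _
  -- `b ∈ ε1 {0}`
  have heM1 : eMap 1 = ({0} : Finset (Fin 2)) := by decide
  have heM0 : ({0} ⊓ {1} : Finset (Fin 2)) = eMap 0 := by decide
  have heM2 : eMap 2 = (Finset.univ : Finset (Fin 2)) := by decide
  have hbε10 : φ1.symm {b} ≤ ε1 {0} := by
    have h2 : ε1 ({0} : Finset (Fin 2)) = e1' (εS 1) := by rw [← heM1, hc1' 1]
    rw [h2]
    exact (mem_iff_singleton_le φ1 b _).mp ((hb _).mpr hξle1)
  -- ¬ Q (h1 {1})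
  have hF2 : ζ ∉ φA (εA (h1Map {1})) := by
    intro hcon
    have h1 : φ1.symm {b} ≤ ε1 {1} := (hQ1 {1}).mp hcon
    have h2 : φ1.symm {b} ≤ ε1 ({0} ⊓ {1}) := by
      rw [hε1.2.2]; exact le_inf hbε10 h1
    rw [heM0, hc1' 0] at h2
    exact hξnle0 ((hb _).mp ((mem_iff_singleton_le φ1 b _).mpr h2))
  -- Q (h1 ⊤)
  have hQtop : ζ ∈ φA (εA (h1Map Finset.univ)) := by
    apply (hQ1 _).mpr
    have h2 : ε1 (Finset.univ : Finset (Fin 2)) = e1' (εS 2) := by rw [← heM2, hc1' 2]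
    rw [h2]
    refine (mem_iff_singleton_le φ1 b _).mp ((hb _).mpr ?_)
    exact le_trans hξle1 (supMap_mono hεS.2.1 (by decide : (1 : Fin 3) ≤ 2))
  -- Q (h2 {1})
  have hsplit : h1Map Finset.univ = h1Map {1} ⊔ h2Map {1} := by decide
  have hQ12 : ζ ∈ φA (εA (h2Map {1})) := by
    have hMem : ζ ∈ φA (εA (h1Map {1}) ⊔ εA (h2Map {1})) := by
      rw [← hεA.2.1, ← hsplit]; exact hQtop
    rw [map_sup, Finset.sup_eq_union, Finset.mem_union] at hMem
    rcases hMem with hMem | hMem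
    · exact absurd hMem hF2
    · exact hMem
  -- decompose over points of ε2 {1}
  rw [hc4' _] at hQ12
  obtain ⟨b', hb'mem, hb'ζ⟩ := supBotEmb_decomp φ2 φA hh2' (ε2 {1}) ζ hQ12
  have hb'hat1 : φ2.symm {b'} ≤ ε2 {1} := (mem_iff_singleton_le φ2 b' _).mp hb'mem
  have h2eq : ε2 (Finset.univ : Finset (Fin 2)) = e2' (εS 2) := by rw [← heM2, hc2' 2]
  have hb'hattop : φ2.symm {b'} ≤ e2' (εS 2) := by
    rw [← h2eq]
    exact le_trans hb'hat1
      (supMap_mono hε2.2.1 (by decide : ({1} : Finset (Fin 2)) ≤ Finset.univ))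
  have hb'top : b' ∈ φ2 (e2' (εS 2)) := (mem_iff_singleton_le φ2 b' _).mpr hb'hattop
  obtain ⟨η, hηmem, hb'η⟩ := supBotEmb_decomp φS φ2 he2' (εS 2) b' hb'top
  have hb'hatη : φ2.symm {b'} ≤ e2' (φS.symm {η}) := (mem_iff_singleton_le φ2 b' _).mp hb'η
  -- the point ζ lies in the image of h1' ∘ e1' at η-hat
  have hζhat : φA.symm {ζ} ≤ h2' (φ2.symm {b'}) := (mem_iff_singleton_le φA ζ _).mp hb'ζ
  have hζη : ζ ∈ φA (h1' (e1' (φS.symm {η}))) := by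
    refine (mem_iff_singleton_le φA ζ _).mpr ?_
    rw [hsq' _]
    exact le_trans hζhat (supMap_mono hh2'.2.1 hb'hatη)
  -- hence η = ξ
  have hbη : b ∈ φ1 (e1' (φS.symm {η})) :=
    (mem_iff_singleton_le φ1 b _).mpr ((hζ _).mp hζη)
  have hξη : φS.symm {ξ} ≤ φS.symm {η} := (hb _).mp hbη
  have hξeqη : η = ξ := by
    have h3 : ({ξ} : Finset (Fin nS)) ≤ ({η} : Finset (Fin nS)) := φS.symm.le_iff_le.mp hξη
    exact (Finset.singleton_subset_singleton.mp h3).symm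
  -- b' lies below ε2 {0} as well
  have hb'20 : φ2.symm {b'} ≤ ε2 {0} := by
    have h2 : ε2 ({0} : Finset (Fin 2)) = e2' (εS 1) := by rw [← heM1, hc2' 1]
    rw [h2]
    refine le_trans hb'hatη (supMap_mono he2'.2.1 ?_)
    rw [hξeqη]
    exact hξle1
  -- hence b' lies below ε2 ∅ = e2' (εS 0)
  have hb'bot : φ2.symm {b'} ≤ e2' (εS 0) := by
    have h2 : φ2.symm {b'} ≤ ε2 ({0} ⊓ {1}) := by
      rw [hε2.2.2]; exact le_inf hb'20 hb'hat1
    rwa [heM0, hc2' 0] at h2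
  -- final contradiction
  have hfin : ζ ∈ φA (h1' (e1' (εS 0))) := by
    refine (mem_iff_singleton_le φA ζ _).mpr ?_
    rw [hsq' _]
    exact le_trans hζhat (supMap_mono hh2'.2.1 hb'bot)
  have hbfin : b ∈ φ1 (e1' (εS 0)) := (mem_iff_singleton_le φ1 b _).mpr ((hζ _).mp hfin)
  exact hξnle0 ((hb _).mp hbfin)
end
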